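/- Let M, n, d be positive integers with M ≥ n + d, and let C ∈ ℝ^{M×n}, D ∈ ℝ^{M×d}. Let [C, D] = UΣVᵀ be a singular value decomposition with U ∈ ℝ^{M×M} and V ∈ ℝ^{(n+d)×(n+d)} orthogonal and singular values σ₁ ≥ … ≥ σ_{n+d} > 0. Partition V = [[V₁₁, V₁₂], [V₂₁, V₂₂]] with V₁₁ ∈ ℝ^{n×n}, V₁₂ ∈ ℝ^{n×d}, V₂₁ ∈ ℝ^{d×n}, V₂₂ ∈ ℝ^{d×d}. If σ_n > σ_{n+1} and V₂₂ is invertible, then the real TLS solution exists, is unique, and is given by X = −V₁₂V₂₂⁻¹. -/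

import Mathlib

open Matrix

/-- The Frobenius norm of a real matrix. -/
noncomputable def frob {α β : Type*} [Fintype α] [Fintype β] (M : Matrix α β ℝ) : ℝ :=
  Real.sqrt (∑ i, ∑ j, M i j ^ 2)

/-- `X` is a real TLS solution for data `C, D`: there exist perturbations `Ẽ, G̃` with
`(C + Ẽ) X = D + G̃` attaining the minimum of `‖[Ẽ, G̃]‖_F` among all feasible triples
`(X', Ẽ', G̃')`. -/
def IsTLSSol {M n d : ℕ}
    (C : Matrix (Fin M) (Fin n) ℝ) (D : Matrix (Fin M) (Fin d) ℝ)
    (X : Matrix (Fin n) (Fin d) ℝ) : Prop :=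
  ∃ (E : Matrix (Fin M) (Fin n) ℝ) (G : Matrix (Fin M) (Fin d) ℝ),
    (C + E) * X = D + G ∧
    ∀ (E' : Matrix (Fin M) (Fin n) ℝ) (G' : Matrix (Fin M) (Fin d) ℝ)
      (X' : Matrix (Fin n) (Fin d) ℝ),
      (C + E') * X' = D + G' → frob (fromCols E G) ≤ frob (fromCols E' G')

/-!
Write `A = [C, D]`, so that `AᵀA = V diag(σ²) Vᵀ`. A feasible perturbation `Δ = [Ẽ, G̃]` satisfies
`(A + Δ) W = 0` for `W = [X; -I]`, which has full column rank `d`. For the orthogonal projector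
`P` onto the columns of `W` this gives `ΔP = -AP`, hence `‖Δ‖² ≥ ‖AP‖² = tr(diag(σ²) Q)` with
`Q = VᵀPV` again a projector of rank `d`. The diagonal of `Q` lies in `[0, 1]` and sums to `d`, so
`tr(diag(σ²) Q) ≥ σ²_{n+1} + ⋯ + σ²_{n+d}`, and because of the gap `σ_n > σ_{n+1}` equality forces
`Q` to be the coordinate projector onto the last `d` coordinates, i.e. `P = V₂V₂ᵀ` with
`V₂ = [V₁₂; V₂₂]`. The bound is attained by `Δ = -AV₂V₂ᵀ`, and `P = V₂V₂ᵀ` puts the columns of `W`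
in the span of those of `V₂`, which forces `X = -V₁₂V₂₂⁻¹`.
-/

def frobSq {α β : Type*} [Fintype α] [Fintype β] (A : Matrix α β ℝ) : ℝ :=
  ∑ i, ∑ j, A i j ^ 2

section FrobeniusSq

variable {m ι κ : Type*} [Fintype m] [Fintype ι] [Fintype κ]

lemma frobSq_nonneg (A : Matrix m ι ℝ) : 0 ≤ frobSq A :=
  Finset.sum_nonneg fun _ _ => Finset.sum_nonneg fun _ _ => sq_nonneg _

@[simp]
lemma frobSq_neg (A : Matrix m ι ℝ) : frobSq (-A) = frobSq A := by
  simp [frobSq]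

lemma frobSq_eq_trace (A : Matrix m ι ℝ) : frobSq A = trace (Aᵀ * A) := by
  rw [frobSq, Finset.sum_comm]
  simp [trace, mul_apply, sq]

lemma frob_le_frob_iff (A : Matrix m ι ℝ) (B : Matrix m κ ℝ) :
    frob A ≤ frob B ↔ frobSq A ≤ frobSq B :=
  Real.sqrt_le_sqrt_iff (frobSq_nonneg B)

end FrobeniusSq

section Projection

variable {m ι : Type*} [Fintype m] [Fintype ι] {P : Matrix ι ι ℝ}

lemma trace_transpose_mul_self_mul_proj (hPs : P.IsSymm) (hPi : IsIdempotentElem P)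
    (A : Matrix m ι ℝ) : trace (Aᵀ * A * P) = frobSq (A * P) := by
  calc trace (Aᵀ * A * P) = trace (Aᵀ * A * P * P) := by rw [Matrix.mul_assoc _ P, hPi.eq]
    _ = trace (P * Aᵀ * (A * P)) := by rw [trace_mul_comm]; simp only [Matrix.mul_assoc]
    _ = frobSq (A * P) := by rw [frobSq_eq_trace, transpose_mul, hPs.eq]

lemma frobSq_mul_proj_le [DecidableEq ι] (hPs : P.IsSymm) (hPi : IsIdempotentElem P)
    (A : Matrix m ι ℝ) :
    frobSq (A * P) ≤ frobSq A := by
  have hsplit : frobSq A = frobSq (A * P) + frobSq (A * (1 - P)) := by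
    rw [← trace_transpose_mul_self_mul_proj hPs hPi,
      ← trace_transpose_mul_self_mul_proj (isSymm_one.sub hPs) hPi.one_sub, ← trace_add,
      ← mul_add, add_sub_cancel, mul_one, frobSq_eq_trace]
  linarith [frobSq_nonneg (A * (1 - P))]

lemma proj_diag_eq_sum_sq (hPs : P.IsSymm) (hPi : IsIdempotentElem P) (k : ι) :
    P k k = ∑ l, P k l ^ 2 := by
  conv_lhs => rw [← hPi.eq, mul_apply]
  simp only [hPs.apply k, sq]

lemma proj_diag_nonneg (hPs : P.IsSymm) (hPi : IsIdempotentElem P) (k : ι) : 0 ≤ P k k := by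
  rw [proj_diag_eq_sum_sq hPs hPi]
  exact Finset.sum_nonneg fun _ _ => sq_nonneg _

lemma proj_diag_le_one (hPs : P.IsSymm) (hPi : IsIdempotentElem P) (k : ι) : P k k ≤ 1 := by
  have hsq : P k k ^ 2 ≤ P k k := by
    nth_rw 2 [proj_diag_eq_sum_sq hPs hPi k]
    exact Finset.single_le_sum (f := fun l => P k l ^ 2) (fun _ _ => sq_nonneg _)
      (Finset.mem_univ k)
  nlinarith [proj_diag_nonneg hPs hPi k]

-- `P k k = P k k ^ 2 + ∑_{l ≠ k} P k l ^ 2`, so a row with diagonal entry `0` or `1` vanishes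
-- off the diagonal.
lemma proj_eq_diagonal_diag [DecidableEq ι] (hPs : P.IsSymm) (hPi : IsIdempotentElem P)
    (h : ∀ k, P k k = 0 ∨ P k k = 1) : P = diagonal P.diag := by
  ext k l
  rcases eq_or_ne k l with rfl | hkl
  · simp
  have hoff : ∑ l ∈ Finset.univ.erase k, P k l ^ 2 = 0 := by
    have hrow := proj_diag_eq_sum_sq hPs hPi k
    rw [← Finset.add_sum_erase _ _ (Finset.mem_univ k)] at hrow
    rcases h k with h0 | h1 <;> nlinarith
  rw [Finset.sum_eq_zero_iff_of_nonneg fun _ _ => sq_nonneg _] at hoff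
  simpa [hkl] using hoff l (Finset.mem_erase.mpr ⟨hkl.symm, Finset.mem_univ l⟩)

lemma isSymm_transpose_mul_mul (hPs : P.IsSymm) (V : Matrix ι ι ℝ) : (Vᵀ * P * V).IsSymm := by
  simp [IsSymm, transpose_mul, hPs.eq, mul_assoc]

lemma isIdempotentElem_transpose_mul_mul [DecidableEq ι] (hPi : IsIdempotentElem P)
    {V : Matrix ι ι ℝ} (hV : V * Vᵀ = 1) : IsIdempotentElem (Vᵀ * P * V) := by
  calc Vᵀ * P * V * (Vᵀ * P * V) = Vᵀ * P * (V * Vᵀ) * P * V := by simp only [mul_assoc]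
    _ = Vᵀ * P * V := by rw [hV, mul_one, mul_assoc Vᵀ, hPi.eq]

end Projection

section RangeProj

variable {ι κ : Type*} [Fintype ι] [Fintype κ] [DecidableEq κ]

noncomputable def rangeProj (W : Matrix ι κ ℝ) : Matrix ι ι ℝ := W * (Wᵀ * W)⁻¹ * Wᵀ

variable {W : Matrix ι κ ℝ}

lemma rangeProj_mul_self (hW : IsUnit (Wᵀ * W).det) : rangeProj W * W = W := by
  rw [rangeProj, Matrix.mul_assoc, Matrix.mul_assoc, nonsing_inv_mul _ hW, Matrix.mul_one]

lemma isSymm_rangeProj : (rangeProj W).IsSymm := by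
  simp [IsSymm, rangeProj, transpose_mul, transpose_nonsing_inv, Matrix.mul_assoc]

lemma isIdempotentElem_rangeProj (hW : IsUnit (Wᵀ * W).det) :
    IsIdempotentElem (rangeProj W) := by
  calc rangeProj W * rangeProj W = rangeProj W * W * ((Wᵀ * W)⁻¹ * Wᵀ) := by
        simp only [rangeProj, Matrix.mul_assoc]
    _ = rangeProj W := by rw [rangeProj_mul_self hW, rangeProj, Matrix.mul_assoc W]

lemma trace_rangeProj (hW : IsUnit (Wᵀ * W).det) :
    trace (rangeProj W) = Fintype.card κ := by
  rw [rangeProj, trace_mul_comm, ← Matrix.mul_assoc, mul_nonsing_inv _ hW, trace_one]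

end RangeProj

section Weights

variable {ι₁ ι₂ : Type*} [Fintype ι₁] [Fintype ι₂] {f q : ι₁ ⊕ ι₂ → ℝ} {a b : ℝ}

lemma sum_one_sub_inr_eq_sum_inl (hq : ∑ k, q k = Fintype.card ι₂) :
    ∑ j, (1 - q (.inr j)) = ∑ i, q (.inl i) := by
  rw [Fintype.sum_sum_type] at hq
  simp only [Finset.sum_sub_distrib, Finset.sum_const, Finset.card_univ, nsmul_eq_mul, mul_one]
  linarith

-- Every unit of weight that `q` puts on the `inl` block (where `f ≥ a`) is missing from the
-- `inr` block (where `f ≤ b`).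
lemma sum_inr_add_mul_le_sum_mul (hq0 : ∀ k, 0 ≤ q k) (hq1 : ∀ k, q k ≤ 1)
    (hq : ∑ k, q k = Fintype.card ι₂) (hfl : ∀ i, a ≤ f (.inl i)) (hfr : ∀ j, f (.inr j) ≤ b) :
    ∑ j, f (.inr j) + (a - b) * ∑ i, q (.inl i) ≤ ∑ k, f k * q k := by
  have hl : a * ∑ i, q (.inl i) ≤ ∑ i, f (.inl i) * q (.inl i) := by
    rw [Finset.mul_sum]
    exact Finset.sum_le_sum fun i _ => mul_le_mul_of_nonneg_right (hfl i) (hq0 _)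
  have hr : ∑ j, f (.inr j) * (1 - q (.inr j)) ≤ b * ∑ i, q (.inl i) := by
    rw [← sum_one_sub_inr_eq_sum_inl hq, Finset.mul_sum]
    exact Finset.sum_le_sum fun j _ =>
      mul_le_mul_of_nonneg_right (hfr j) (sub_nonneg.mpr (hq1 _))
  simp only [mul_one_sub, Finset.sum_sub_distrib] at hr
  rw [Fintype.sum_sum_type]
  linarith

lemma eq_sumElim_zero_one_of_sum_inl_eq_zero (hq0 : ∀ k, 0 ≤ q k) (hq1 : ∀ k, q k ≤ 1)
    (hq : ∑ k, q k = Fintype.card ι₂) (h : ∑ i, q (.inl i) = 0) :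
    q = Sum.elim (fun _ => 0) (fun _ => 1) := by
  have hl := (Finset.sum_eq_zero_iff_of_nonneg fun i _ => hq0 (.inl i)).mp h
  have hr := (Finset.sum_eq_zero_iff_of_nonneg fun j _ => sub_nonneg.mpr (hq1 (.inr j))).mp
    ((sum_one_sub_inr_eq_sum_inl hq).trans h)
  ext (i | j)
  · simpa using hl i (Finset.mem_univ i)
  · exact (sub_eq_zero.mp (hr j (Finset.mem_univ j))).symm

end Weights

section LowerBound

variable {m ι₁ ι₂ : Type*} [Fintype m] [Fintype ι₁] [Fintype ι₂] [DecidableEq ι₁]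
  [DecidableEq ι₂] {f : ι₁ ⊕ ι₂ → ℝ} {a b : ℝ}

lemma trace_diagonal_mul {ι : Type*} [Fintype ι] [DecidableEq ι] (f : ι → ℝ) (Q : Matrix ι ι ℝ) :
    trace (diagonal f * Q) = ∑ k, f k * Q k k := by
  simp [trace, diagonal_mul]

lemma sum_inr_add_mul_le_trace_diagonal_mul {Q : Matrix (ι₁ ⊕ ι₂) (ι₁ ⊕ ι₂) ℝ} (hQs : Q.IsSymm)
    (hQi : IsIdempotentElem Q) (hQtr : trace Q = Fintype.card ι₂)
    (hfl : ∀ i, a ≤ f (.inl i)) (hfr : ∀ j, f (.inr j) ≤ b) :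
    ∑ j, f (.inr j) + (a - b) * ∑ i, Q (.inl i) (.inl i) ≤ trace (diagonal f * Q) := by
  rw [trace_diagonal_mul]
  exact sum_inr_add_mul_le_sum_mul (q := Q.diag) (fun k => proj_diag_nonneg hQs hQi k)
    (fun k => proj_diag_le_one hQs hQi k) hQtr hfl hfr

lemma sum_inr_le_trace_diagonal_mul {Q : Matrix (ι₁ ⊕ ι₂) (ι₁ ⊕ ι₂) ℝ} (hQs : Q.IsSymm)
    (hQi : IsIdempotentElem Q) (hQtr : trace Q = Fintype.card ι₂) (hab : b ≤ a)
    (hfl : ∀ i, a ≤ f (.inl i)) (hfr : ∀ j, f (.inr j) ≤ b) :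
    ∑ j, f (.inr j) ≤ trace (diagonal f * Q) := by
  have hgap : 0 ≤ (a - b) * ∑ i, Q (.inl i) (.inl i) :=
    mul_nonneg (sub_nonneg.mpr hab) (Finset.sum_nonneg fun i _ => proj_diag_nonneg hQs hQi _)
  linarith [sum_inr_add_mul_le_trace_diagonal_mul hQs hQi hQtr hfl hfr]

lemma eq_diagonal_of_trace_diagonal_mul_le {Q : Matrix (ι₁ ⊕ ι₂) (ι₁ ⊕ ι₂) ℝ}
    (hQs : Q.IsSymm) (hQi : IsIdempotentElem Q) (hQtr : trace Q = Fintype.card ι₂)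
    (hab : b < a) (hfl : ∀ i, a ≤ f (.inl i)) (hfr : ∀ j, f (.inr j) ≤ b)
    (h : trace (diagonal f * Q) ≤ ∑ j, f (.inr j)) :
    Q = diagonal (Sum.elim (fun _ => 0) (fun _ => 1)) := by
  have hsL : ∑ i, Q (.inl i) (.inl i) = 0 := by
    have hle := sum_inr_add_mul_le_trace_diagonal_mul hQs hQi hQtr hfl hfr
    have hnonneg :=
      Finset.sum_nonneg fun i (_ : i ∈ Finset.univ) => proj_diag_nonneg hQs hQi (.inl i)
    nlinarith
  have hdiag : Q.diag = Sum.elim (fun _ => 0) (fun _ => 1) :=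
    eq_sumElim_zero_one_of_sum_inl_eq_zero (fun k => proj_diag_nonneg hQs hQi k)
      (fun k => proj_diag_le_one hQs hQi k) hQtr hsL
  rw [proj_eq_diagonal_diag hQs hQi, hdiag]
  rintro (i | j)
  · exact .inl (congrFun hdiag (.inl i))
  · exact .inr (congrFun hdiag (.inr j))

end LowerBound

section Perturbation

variable {m ι κ : Type*} [Fintype m] [Fintype ι] [Fintype κ] [DecidableEq κ]

lemma trace_mul_rangeProj_le_frobSq [DecidableEq ι] {A Δ : Matrix m ι ℝ} {W : Matrix ι κ ℝ}
    (hW : IsUnit (Wᵀ * W).det) (h : (A + Δ) * W = 0) :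
    trace (Aᵀ * A * rangeProj W) ≤ frobSq Δ := by
  have hPs := isSymm_rangeProj (W := W)
  have hPi := isIdempotentElem_rangeProj hW
  have hP : Δ * rangeProj W = -(A * rangeProj W) := by
    have h0 : (A + Δ) * rangeProj W = 0 := by
      rw [rangeProj, ← Matrix.mul_assoc, ← Matrix.mul_assoc, h, Matrix.zero_mul, Matrix.zero_mul]
    rw [Matrix.add_mul] at h0
    exact eq_neg_of_add_eq_zero_right h0
  rw [trace_transpose_mul_self_mul_proj hPs hPi, ← frobSq_neg, ← hP]
  exact frobSq_mul_proj_le hPs hPi Δ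

lemma trace_mul_mul_transpose_mul (V D P : Matrix ι ι ℝ) :
    trace (V * D * Vᵀ * P) = trace (D * (Vᵀ * P * V)) := by
  rw [Matrix.mul_assoc, Matrix.mul_assoc, trace_mul_comm]
  simp only [Matrix.mul_assoc]

end Perturbation

section SpectralBound

variable {m ι₁ ι₂ : Type*} [Fintype m] [Fintype ι₁] [Fintype ι₂] [DecidableEq ι₁]
  [DecidableEq ι₂] {A : Matrix m (ι₁ ⊕ ι₂) ℝ} {V : Matrix (ι₁ ⊕ ι₂) (ι₁ ⊕ ι₂) ℝ}
  {f : ι₁ ⊕ ι₂ → ℝ} {a b : ℝ}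

lemma mul_diagonal_sumElim_mul_transpose (V : Matrix (ι₁ ⊕ ι₂) (ι₁ ⊕ ι₂) ℝ) :
    V * diagonal (Sum.elim (fun _ => 0) (fun _ => 1)) * Vᵀ = V.toCols₂ * V.toCols₂ᵀ := by
  ext i l
  simp [mul_apply, diagonal_apply, Fintype.sum_sum_type]

lemma trace_transpose_mul_rangeProj_mul (hV : V * Vᵀ = 1) {W : Matrix (ι₁ ⊕ ι₂) ι₂ ℝ}
    (hW : IsUnit (Wᵀ * W).det) : trace (Vᵀ * rangeProj W * V) = Fintype.card ι₂ := by
  rw [trace_mul_comm, ← Matrix.mul_assoc, hV, Matrix.one_mul, trace_rangeProj hW]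

lemma trace_diagonal_mul_conj_rangeProj_le (hA : Aᵀ * A = V * diagonal f * Vᵀ)
    {Δ : Matrix m (ι₁ ⊕ ι₂) ℝ} {W : Matrix (ι₁ ⊕ ι₂) ι₂ ℝ} (hW : IsUnit (Wᵀ * W).det)
    (h : (A + Δ) * W = 0) : trace (diagonal f * (Vᵀ * rangeProj W * V)) ≤ frobSq Δ := by
  rw [← trace_mul_mul_transpose_mul, ← hA]
  exact trace_mul_rangeProj_le_frobSq hW h

lemma sum_inr_le_frobSq_of_mul_eq_zero (hV : V * Vᵀ = 1) (hA : Aᵀ * A = V * diagonal f * Vᵀ)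
    (hab : b ≤ a) (hfl : ∀ i, a ≤ f (.inl i)) (hfr : ∀ j, f (.inr j) ≤ b)
    {Δ : Matrix m (ι₁ ⊕ ι₂) ℝ} {W : Matrix (ι₁ ⊕ ι₂) ι₂ ℝ} (hW : IsUnit (Wᵀ * W).det)
    (h : (A + Δ) * W = 0) : ∑ j, f (.inr j) ≤ frobSq Δ :=
  (sum_inr_le_trace_diagonal_mul (isSymm_transpose_mul_mul isSymm_rangeProj V)
    (isIdempotentElem_transpose_mul_mul (isIdempotentElem_rangeProj hW) hV)
    (trace_transpose_mul_rangeProj_mul hV hW) hab hfl hfr).trans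
    (trace_diagonal_mul_conj_rangeProj_le hA hW h)

lemma rangeProj_eq_of_frobSq_le (hV : V * Vᵀ = 1) (hA : Aᵀ * A = V * diagonal f * Vᵀ)
    (hab : b < a) (hfl : ∀ i, a ≤ f (.inl i)) (hfr : ∀ j, f (.inr j) ≤ b)
    {Δ : Matrix m (ι₁ ⊕ ι₂) ℝ} {W : Matrix (ι₁ ⊕ ι₂) ι₂ ℝ} (hW : IsUnit (Wᵀ * W).det)
    (h : (A + Δ) * W = 0) (hle : frobSq Δ ≤ ∑ j, f (.inr j)) :
    rangeProj W = V.toCols₂ * V.toCols₂ᵀ := by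
  have hQ := eq_diagonal_of_trace_diagonal_mul_le (isSymm_transpose_mul_mul isSymm_rangeProj V)
    (isIdempotentElem_transpose_mul_mul (isIdempotentElem_rangeProj hW) hV)
    (trace_transpose_mul_rangeProj_mul hV hW) hab hfl hfr
    ((trace_diagonal_mul_conj_rangeProj_le hA hW h).trans hle)
  rw [← mul_diagonal_sumElim_mul_transpose, ← hQ]
  simp only [← Matrix.mul_assoc, hV, Matrix.one_mul]
  simp only [Matrix.mul_assoc, hV, Matrix.mul_one]

end SpectralBound

section Minimizer

variable {m ι₁ ι₂ : Type*} [Fintype m] [Fintype ι₁] [Fintype ι₂] [DecidableEq ι₁]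
  [DecidableEq ι₂] {A : Matrix m (ι₁ ⊕ ι₂) ℝ} {V : Matrix (ι₁ ⊕ ι₂) (ι₁ ⊕ ι₂) ℝ}
  {f : ι₁ ⊕ ι₂ → ℝ}

lemma toCols₂_transpose_mul_toCols₂ (hV : Vᵀ * V = 1) : V.toCols₂ᵀ * V.toCols₂ = 1 := by
  ext i j
  simpa [mul_apply, one_apply] using congrFun (congrFun hV (.inr i)) (.inr j)

lemma frobSq_mul_toCols₂_mul_transpose (hV : Vᵀ * V = 1) (hA : Aᵀ * A = V * diagonal f * Vᵀ) :
    frobSq (A * (V.toCols₂ * V.toCols₂ᵀ)) = ∑ j, f (.inr j) := by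
  set D : Matrix (ι₁ ⊕ ι₂) (ι₁ ⊕ ι₂) ℝ := diagonal (Sum.elim (fun _ => 0) (fun _ => 1))
  have hDi : IsIdempotentElem D := by
    rw [IsIdempotentElem, diagonal_mul_diagonal]
    congr 1
    ext (i | j) <;> simp
  have hPs : (V * D * Vᵀ).IsSymm := by
    simpa using isSymm_transpose_mul_mul (isSymm_diagonal _) Vᵀ
  have hPi : IsIdempotentElem (V * D * Vᵀ) := by
    simpa using isIdempotentElem_transpose_mul_mul hDi (V := Vᵀ) (by simpa using hV)
  have hconj : Vᵀ * (V * D * Vᵀ) * V = D := by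
    simp only [← Matrix.mul_assoc, hV, Matrix.one_mul]
    simp only [Matrix.mul_assoc, hV, Matrix.mul_one]
  rw [← mul_diagonal_sumElim_mul_transpose, ← trace_transpose_mul_self_mul_proj hPs hPi, hA,
    trace_mul_mul_transpose_mul, hconj, trace_diagonal_mul, Fintype.sum_sum_type]
  simp [D]

end Minimizer

section TotalLeastSquares

lemma mul_eq_add_iff_fromCols_mul_fromRows_eq_zero {R m n d : Type*} [Ring R] [Fintype n]
    [Fintype d] [DecidableEq d] (C E : Matrix m n R) (D G : Matrix m d R) (X : Matrix n d R) :
    (C + E) * X = D + G ↔ (fromCols C D + fromCols E G) * fromRows X (-1 : Matrix d d R) = 0 := by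
  have hadd : fromCols C D + fromCols E G = fromCols (C + E) (D + G) := by
    ext i (j | j) <;> rfl
  rw [hadd, fromCols_mul_fromRows, Matrix.mul_neg, Matrix.mul_one, add_neg_eq_zero]

lemma isUnit_det_fromRows_neg_one {n d : Type*} [Fintype n] [Fintype d] [DecidableEq d]
    (X : Matrix n d ℝ) :
    IsUnit ((fromRows X (-1 : Matrix d d ℝ))ᵀ * fromRows X (-1 : Matrix d d ℝ)).det := by
  have hpos : (Xᵀ * X + 1).PosDef := by
    simpa [conjTranspose_eq_transpose_of_trivial] using
      PosDef.posSemidef_add (posSemidef_conjTranspose_mul_self X) PosDef.one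
  rw [transpose_fromRows, fromCols_mul_fromRows, ← isUnit_iff_isUnit_det]
  simpa using hpos.isUnit

lemma exists_fromRows_neg_one_eq_mul_iff {R n d : Type*} [CommRing R] [Fintype d] [DecidableEq d]
    {V₁₂ : Matrix n d R} {V₂₂ : Matrix d d R} (hV₂₂ : IsUnit V₂₂.det) (X : Matrix n d R) :
    (∃ K : Matrix d d R, fromRows X (-1 : Matrix d d R) = fromRows V₁₂ V₂₂ * K) ↔
      X = -(V₁₂ * V₂₂⁻¹) := by
  simp only [fromRows_mul, fromRows_ext_iff]
  constructor
  · rintro ⟨K, rfl, hK⟩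
    rw [← Matrix.mul_neg, ← Matrix.one_mul K, ← nonsing_inv_mul _ hV₂₂, Matrix.mul_assoc, ← hK,
      Matrix.mul_neg, Matrix.mul_one]
  · rintro rfl
    exact ⟨-V₂₂⁻¹, by rw [Matrix.mul_neg], by rw [Matrix.mul_neg, mul_nonsing_inv _ hV₂₂]⟩

theorem isTLSSol_iff {M n d : ℕ} {C : Matrix (Fin M) (Fin n) ℝ} {D : Matrix (Fin M) (Fin d) ℝ}
    {V₁₁ : Matrix (Fin n) (Fin n) ℝ} {V₁₂ : Matrix (Fin n) (Fin d) ℝ}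
    {V₂₁ : Matrix (Fin d) (Fin n) ℝ} {V₂₂ : Matrix (Fin d) (Fin d) ℝ}
    (hV : (fromBlocks V₁₁ V₁₂ V₂₁ V₂₂)ᵀ * fromBlocks V₁₁ V₁₂ V₂₁ V₂₂ = 1)
    {f : Fin n ⊕ Fin d → ℝ}
    (hA : (fromCols C D)ᵀ * fromCols C D =
      fromBlocks V₁₁ V₁₂ V₂₁ V₂₂ * diagonal f * (fromBlocks V₁₁ V₁₂ V₂₁ V₂₂)ᵀ)
    {a b : ℝ} (hab : b < a) (hfl : ∀ i, a ≤ f (.inl i)) (hfr : ∀ j, f (.inr j) ≤ b)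
    (hV₂₂ : IsUnit V₂₂.det) (X : Matrix (Fin n) (Fin d) ℝ) :
    IsTLSSol C D X ↔ X = -(V₁₂ * V₂₂⁻¹) := by
  set V := fromBlocks V₁₁ V₁₂ V₂₁ V₂₂
  set A := fromCols C D
  have hV' : V * Vᵀ = 1 := mul_eq_one_comm.mp hV
  have hV₂ : V.toCols₂ = fromRows V₁₂ V₂₂ := by ext (i | i) j <;> rfl
  have hlow (E G X') (h : (C + E) * X' = D + G) : ∑ j, f (.inr j) ≤ frobSq (fromCols E G) :=
    sum_inr_le_frobSq_of_mul_eq_zero hV' hA hab.le hfl hfr (isUnit_det_fromRows_neg_one X')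
      ((mul_eq_add_iff_fromCols_mul_fromRows_eq_zero ..).mp h)
  set Δ₀ := -(A * (V.toCols₂ * V.toCols₂ᵀ))
  have hopt : frobSq Δ₀ = ∑ j, f (.inr j) := by
    rw [frobSq_neg, frobSq_mul_toCols₂_mul_transpose hV hA]
  have hfeas : (C + Δ₀.toCols₁) * -(V₁₂ * V₂₂⁻¹) = D + Δ₀.toCols₂ := by
    obtain ⟨K, hK⟩ := (exists_fromRows_neg_one_eq_mul_iff hV₂₂ _).mpr rfl
    rw [mul_eq_add_iff_fromCols_mul_fromRows_eq_zero, fromCols_toCols, hK, ← hV₂,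
      Matrix.add_mul, Matrix.neg_mul, Matrix.mul_assoc, Matrix.mul_assoc,
      ← Matrix.mul_assoc V.toCols₂ᵀ, toCols₂_transpose_mul_toCols₂ hV, Matrix.one_mul,
      add_neg_cancel]
  constructor
  · rintro ⟨E, G, hfe, hmin⟩
    have hle : frobSq (fromCols E G) ≤ ∑ j, f (.inr j) := by
      rw [← hopt, ← fromCols_toCols Δ₀, ← frob_le_frob_iff]
      exact hmin _ _ _ hfeas
    have hW := isUnit_det_fromRows_neg_one X
    rw [mul_eq_add_iff_fromCols_mul_fromRows_eq_zero] at hfe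
    have hP := rangeProj_eq_of_frobSq_le hV' hA hab hfl hfr hW hfe hle
    refine (exists_fromRows_neg_one_eq_mul_iff hV₂₂ X).mp
      ⟨V.toCols₂ᵀ * fromRows X (-1 : Matrix (Fin d) (Fin d) ℝ), ?_⟩
    rw [← hV₂, ← Matrix.mul_assoc, ← hP, rangeProj_mul_self hW]
  · rintro rfl
    refine ⟨Δ₀.toCols₁, Δ₀.toCols₂, hfeas, fun E' G' X' h => ?_⟩
    rw [frob_le_frob_iff, fromCols_toCols, hopt]
    exact hlow E' G' X' h

end TotalLeastSquares

section SingularValueDecomposition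

lemma transpose_mul_self_eq_of_eq_mul_mul {R m ι : Type*} [CommRing R] [Fintype m] [Fintype ι]
    [DecidableEq m] {A S : Matrix m ι R} {U : Matrix m m R} {V : Matrix ι ι R}
    (hU : Uᵀ * U = 1) (h : A = U * S * Vᵀ) : Aᵀ * A = V * (Sᵀ * S) * Vᵀ := by
  rw [h]
  simp only [transpose_mul, transpose_transpose, Matrix.mul_assoc]
  rw [← Matrix.mul_assoc Uᵀ, hU, Matrix.one_mul]

lemma transpose_mul_self_of_single_entry_cols {m κ : Type*} [Fintype m] [DecidableEq m]
    [DecidableEq κ] {e : κ → m} (he : Function.Injective e) (s : κ → ℝ) :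
    (of fun i j => if i = e j then s j else 0)ᵀ * (of fun i j => if i = e j then s j else 0) =
      diagonal fun j => s j ^ 2 := by
  ext j k
  rcases eq_or_ne j k with rfl | hjk
  · simp [mul_apply, sq]
  · simp [mul_apply, he.eq_iff, hjk, hjk.symm]

end SingularValueDecomposition

/-- given an SVD `[C, D] = U Σ Vᵀ` with positive decreasing singular
values, the gap condition `σ_n > σ_{n+1}` and `V₂₂` invertible, the real TLS solution
exists, is unique, and is given by `X = −V₁₂V₂₂⁻¹`. -/
theorem tls_solution {M n d : ℕ} (hd : 0 < d) (hM : n + d ≤ M)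
    (C : Matrix (Fin M) (Fin n) ℝ) (D : Matrix (Fin M) (Fin d) ℝ)
    (U : Matrix (Fin M) (Fin M) ℝ) (hU : Uᵀ * U = 1)
    (V₁₁ : Matrix (Fin n) (Fin n) ℝ) (V₁₂ : Matrix (Fin n) (Fin d) ℝ)
    (V₂₁ : Matrix (Fin d) (Fin n) ℝ) (V₂₂ : Matrix (Fin d) (Fin d) ℝ)
    (hV : (fromBlocks V₁₁ V₁₂ V₂₁ V₂₂)ᵀ * fromBlocks V₁₁ V₁₂ V₂₁ V₂₂ = 1)
    (σ : Fin (n + d) → ℝ) (hσpos : ∀ i, 0 < σ i) (hσdec : Antitone σ)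
    (hSVD : fromCols C D =
      U * (Matrix.of fun (i : Fin M) (j : Fin n ⊕ Fin d) =>
            if (i : ℕ) = ((finSumFinEquiv j : Fin (n + d)) : ℕ)
            then σ (finSumFinEquiv j) else 0) *
        (fromBlocks V₁₁ V₁₂ V₂₁ V₂₂)ᵀ)
    (hgap : σ ⟨n, by omega⟩ < σ ⟨n - 1, by omega⟩)
    (hV₂₂ : IsUnit V₂₂.det) :
    IsTLSSol C D (-(V₁₂ * V₂₂⁻¹)) ∧
    ∀ X : Matrix (Fin n) (Fin d) ℝ, IsTLSSol C D X → X = -(V₁₂ * V₂₂⁻¹) := by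
  have hS : (of fun (i : Fin M) (j : Fin n ⊕ Fin d) =>
      if (i : ℕ) = ((finSumFinEquiv j : Fin (n + d)) : ℕ) then σ (finSumFinEquiv j) else 0) =
      of fun i j => if i = Fin.castLE hM (finSumFinEquiv j) then σ (finSumFinEquiv j) else 0 := by
    ext i j
    simp [Fin.ext_iff]
  have hA := transpose_mul_self_eq_of_eq_mul_mul hU hSVD
  rw [hS, transpose_mul_self_of_single_entry_cols (e := fun j => Fin.castLE hM (finSumFinEquiv j))
    fun j k h => finSumFinEquiv.injective (Fin.castLE_injective hM h)] at hA
  have hfl (i : Fin n) : σ ⟨n - 1, by omega⟩ ^ 2 ≤ σ (finSumFinEquiv (.inl i)) ^ 2 :=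
    pow_le_pow_left₀ (hσpos _).le (hσdec (by simp [Fin.le_def]; omega)) 2
  have hfr (j : Fin d) : σ (finSumFinEquiv (.inr j)) ^ 2 ≤ σ ⟨n, by omega⟩ ^ 2 :=
    pow_le_pow_left₀ (hσpos _).le (hσdec (by simp [Fin.le_def])) 2
  have hiff := isTLSSol_iff hV hA (pow_lt_pow_left₀ hgap (hσpos _).le two_ne_zero) hfl hfr hV₂₂
  exact ⟨(hiff _).mpr rfl, fun X => (hiff X).mp⟩
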